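/- arXiv:1504.07863 — 4 statements merged into one kernel-verified Lean document; each statement's English description precedes it below -/
import Mathlib

section
/- The WOWA operator is monotone: if a, a' ∈ ℝ^K satisfy a_j ≥ a'_j for all j, then wowa_{(v,p)}(a) ≥ wowa_{(v,p)}(a'). -/
/-!
WOWA is a Choquet integral for the capacity `S ↦ w*(P S)`. Once `σ` sorts `a` nonincreasingly,
`{k | t ≤ a k}` is the image under `σ` of a prefix `{0, …, N-1}`, so the weights `ω_j` telescope to
`w*(P{a ≥ t}) = ∑_j ω_j 1[t ≤ a (σ j)]`. Integrating over `[-M, M]` and using `∑_j ω_j = 1` gives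
`wowaW σ a = ∫_{-M}^{M} w*(P{a ≥ t}) dt - M`, whose right side does not mention `σ` and whose
integrand is monotone in `a` because `w*` is.
-/

open Finset

/-- The piecewise linear function `w*` induced by the weight vector `v`:
`w*(0)=0`, `w*(j/K) = ∑_{i≤j} v i`, linear on each `[(j-1)/K, j/K]`. -/
noncomputable def wstar (K : ℕ) (v : Fin K → ℝ) (t : ℝ) : ℝ :=
  ∑ i : Fin K, v i * min 1 (max 0 (t * (K : ℝ) - (i.1 : ℝ)))

/-- The WOWA weight `ω_j = w*(∑_{i≤j} p_{σ(i)}) - w*(∑_{i<j} p_{σ(i)})`. -/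
noncomputable def wowaWeight (K : ℕ) (v p : Fin K → ℝ) (σ : Equiv.Perm (Fin K))
    (j : Fin K) : ℝ :=
  wstar K v (∑ i ∈ Finset.Iic j, p (σ i)) - wstar K v (∑ i ∈ Finset.Iio j, p (σ i))

/-- The WOWA aggregation of `a` relative to a permutation `σ`
(sorting `a` nonincreasingly gives the WOWA value). -/
noncomputable def wowaW (K : ℕ) (v p : Fin K → ℝ) (σ : Equiv.Perm (Fin K))
    (a : Fin K → ℝ) : ℝ :=
  ∑ j : Fin K, wowaWeight K v p σ j * a (σ j)

theorem Fin.exists_iff_lt_of_antitone {K : ℕ} (P : Fin K → Prop) (hP : Antitone P) :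
    ∃ N ≤ K, ∀ j : Fin K, P j ↔ (j : ℕ) < N := by
  classical
  refine ⟨#(univ.filter P), (card_filter_le _ _).trans_eq (card_fin K),
    fun j => ⟨fun hj => ?_, fun hj => ?_⟩⟩
  · have : Iic j ⊆ univ.filter P := fun i hi => by
      simpa using hP (mem_Iic.mp hi) hj
    simpa [Fin.card_Iic] using card_le_card this
  · by_contra hj'
    have : univ.filter P ⊆ Iio j := fun i hi => by
      simp only [mem_filter, mem_univ, true_and] at hi
      exact mem_Iio.mpr (lt_of_not_ge fun hji => hj' (hP hji hi))
    have := card_le_card this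
    rw [Fin.card_Iio] at this
    omega

theorem Fin.sum_ite_lt_sub {G : Type*} [AddCommGroup G] {K N : ℕ} (hN : N ≤ K) (f : ℕ → G) :
    ∑ j : Fin K, (if (j : ℕ) < N then f (j + 1) - f j else 0) = f N - f 0 := by
  rw [Fin.sum_univ_eq_sum_range (fun j => if j < N then f (j + 1) - f j else 0), ← sum_filter,
    ← sum_range_sub]
  congr 1
  ext j
  simp only [mem_filter, mem_range]
  omega

theorem intervalIntegral_ite_le_const {a b x : ℝ} (hx : x ∈ Set.Icc a b) (c : ℝ) :
    ∫ t in a..b, (if t ≤ x then c else 0) = (x - a) * c := by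
  have := intervalIntegral.integral_indicator (f := fun _ => c) (μ := MeasureTheory.volume) hx
  simp only [Set.indicator_apply, Set.mem_ofPred_eq] at this
  rw [this, intervalIntegral.integral_const, smul_eq_mul]

theorem intervalIntegrable_ite_le_const (a b x c : ℝ) :
    IntervalIntegrable (fun t => if t ≤ x then c else 0) MeasureTheory.volume a b :=
  intervalIntegrable_iff.mpr <|
    (MeasureTheory.integrableOn_const (C := c) measure_Ioc_lt_top.ne).indicator measurableSet_Iic

section Wowa

variable {K : ℕ} (v p : Fin K → ℝ)

theorem wstar_monotone (hv0 : ∀ j, 0 ≤ v j) : Monotone (wstar K v) := fun s t hst =>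
  sum_le_sum fun i _ => mul_le_mul_of_nonneg_left
    (min_le_min_left _ (max_le_max_left _ (by gcongr))) (hv0 i)

theorem wstar_zero : wstar K v 0 = 0 :=
  sum_eq_zero fun i _ => by simp

theorem wstar_one (hvs : ∑ j, v j = 1) : wstar K v 1 = 1 := by
  refine (sum_congr rfl fun i _ => ?_).trans hvs
  have hi : (i : ℝ) + 1 ≤ K := by exact_mod_cast i.isLt
  rw [max_eq_right (by linarith), min_eq_left (by linarith), mul_one]

noncomputable def prefixMass (σ : Equiv.Perm (Fin K)) (m : ℕ) : ℝ :=
  ∑ i : Fin K, if (i : ℕ) < m then p (σ i) else 0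

theorem prefixMass_zero (σ : Equiv.Perm (Fin K)) : prefixMass p σ 0 = 0 := by
  simp [prefixMass]

theorem prefixMass_of_le (σ : Equiv.Perm (Fin K)) {m : ℕ} (hm : K ≤ m) :
    prefixMass p σ m = ∑ k, p k := by
  rw [prefixMass, ← Equiv.sum_comp σ p]
  exact sum_congr rfl fun i _ => if_pos (i.isLt.trans_le hm)

theorem wowaWeight_eq_sub (σ : Equiv.Perm (Fin K)) (j : Fin K) :
    wowaWeight K v p σ j =
      wstar K v (prefixMass p σ (j + 1)) - wstar K v (prefixMass p σ j) := by
  simp only [wowaWeight, prefixMass, ← sum_filter]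
  congr 3 <;> ext i <;> simp

theorem sum_wowaWeight (hvs : ∑ j, v j = 1) (hps : ∑ j, p j = 1) (σ : Equiv.Perm (Fin K)) :
    ∑ j, wowaWeight K v p σ j = 1 := by
  have := Fin.sum_ite_lt_sub (le_refl K) fun m => wstar K v (prefixMass p σ m)
  simp only [Fin.is_lt, if_true, ← wowaWeight_eq_sub] at this
  rw [this, prefixMass_of_le p σ le_rfl, hps, wstar_one v hvs, prefixMass_zero, wstar_zero,
    sub_zero]

noncomputable def upperMass (a : Fin K → ℝ) (t : ℝ) : ℝ :=
  ∑ k, if t ≤ a k then p k else 0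

theorem upperMass_le_upperMass (hp0 : ∀ j, 0 ≤ p j) {a a' : Fin K → ℝ}
    (hle : ∀ k, a' k ≤ a k) {s t : ℝ} (hst : s ≤ t) : upperMass p a' t ≤ upperMass p a s := by
  refine sum_le_sum fun k _ => ?_
  split_ifs with h₁ h₂ <;> first | exact le_rfl | exact hp0 k | linarith [hle k]

theorem wstar_upperMass_antitone (hv0 : ∀ j, 0 ≤ v j) (hp0 : ∀ j, 0 ≤ p j) (a : Fin K → ℝ) :
    Antitone fun t => wstar K v (upperMass p a t) := fun _ _ hst =>
  wstar_monotone v hv0 (upperMass_le_upperMass p hp0 (fun _ => le_rfl) hst)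

theorem wstar_upperMass_eq_sum {a : Fin K → ℝ} {σ : Equiv.Perm (Fin K)}
    (hσ : ∀ i j : Fin K, i ≤ j → a (σ j) ≤ a (σ i)) (t : ℝ) :
    wstar K v (upperMass p a t) = ∑ j, if t ≤ a (σ j) then wowaWeight K v p σ j else 0 := by
  obtain ⟨N, hNK, hN⟩ := Fin.exists_iff_lt_of_antitone (fun j => t ≤ a (σ j))
    fun i j hij h => h.trans (hσ i j hij)
  have hmass : upperMass p a t = prefixMass p σ N := by
    rw [upperMass, ← Equiv.sum_comp σ]
    exact sum_congr rfl fun j _ => by simp only [hN j]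
  have hsum := Fin.sum_ite_lt_sub hNK fun m => wstar K v (prefixMass p σ m)
  simp only [← wowaWeight_eq_sub, prefixMass_zero, wstar_zero, sub_zero] at hsum
  rw [hmass, ← hsum]
  exact sum_congr rfl fun j _ => by simp only [hN j]

theorem wowaW_eq_integral (hvs : ∑ j, v j = 1) (hps : ∑ j, p j = 1) {a : Fin K → ℝ}
    {σ : Equiv.Perm (Fin K)} (hσ : ∀ i j : Fin K, i ≤ j → a (σ j) ≤ a (σ i)) {M : ℝ}
    (hM : ∀ k, |a k| ≤ M) :
    wowaW K v p σ a = (∫ t in -M..M, wstar K v (upperMass p a t)) - M := by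
  have hint : ∫ t in -M..M, wstar K v (upperMass p a t) =
      ∑ j, (a (σ j) + M) * wowaWeight K v p σ j := by
    simp only [wstar_upperMass_eq_sum v p hσ]
    rw [intervalIntegral.integral_finsetSum fun j _ => intervalIntegrable_ite_le_const _ _ _ _]
    refine sum_congr rfl fun j _ => ?_
    rw [intervalIntegral_ite_le_const (abs_le.mp (hM _)), sub_neg_eq_add]
  rw [hint, wowaW]
  simp only [add_mul, sum_add_distrib, ← mul_sum, sum_wowaWeight v p hvs hps, mul_one]
  simp only [mul_comm, add_sub_cancel_right]

end Wowa

/-- The WOWA operator is monotone. -/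
theorem wowa_monotone (K : ℕ) (v p : Fin K → ℝ)
    (hv0 : ∀ j, 0 ≤ v j) (hvs : ∑ j, v j = 1)
    (hp0 : ∀ j, 0 ≤ p j) (hps : ∑ j, p j = 1)
    (a a' : Fin K → ℝ) (hle : ∀ j, a' j ≤ a j)
    (σ σ' : Equiv.Perm (Fin K))
    (hσ : ∀ i j : Fin K, i ≤ j → a (σ j) ≤ a (σ i))
    (hσ' : ∀ i j : Fin K, i ≤ j → a' (σ' j) ≤ a' (σ' i)) :
    wowaW K v p σ' a' ≤ wowaW K v p σ a := by
  set M := ∑ k, (|a k| + |a' k|)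
  have hM₀ : 0 ≤ M := sum_nonneg fun k _ => by positivity
  have hM : ∀ k, |a k| + |a' k| ≤ M := fun k =>
    single_le_sum (f := fun k => |a k| + |a' k|) (fun k _ => by positivity) (mem_univ k)
  rw [wowaW_eq_integral v p hvs hps hσ fun k => by linarith [hM k, abs_nonneg (a' k)],
    wowaW_eq_integral v p hvs hps hσ' fun k => by linarith [hM k, abs_nonneg (a k)]]
  gcongr ?_ - M
  exact intervalIntegral.integral_mono (by linarith)
    (wstar_upperMass_antitone v p hv0 hp0 a').intervalIntegrable
    (wstar_upperMass_antitone v p hv0 hp0 a).intervalIntegrable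
    fun t => wstar_monotone v hv0 (upperMass_le_upperMass p hp0 hle le_rfl)
end

section
/- (Lemma 2) For any nonnegative vector a ∈ ℝ^K, wowa_{(v,p)}(a) ≤ v_1 · K · Σ_{j=1}^K p_j a_j, provided v_1 ≥ v_2 ≥ … ≥ v_K. -/
/-!
`w*` is a sum of ramps `t ↦ v i * min 1 (max 0 (t K - i))`. The unweighted ramps telescope to
the clamp of `t K` to `[0, K]`, which is `K`-Lipschitz and monotone; since every `v i ≤ v 0`,
`w* t - w* s ≤ v 0 · K · (t - s)` for `s ≤ t`. Each WOWA weight `ω_j` is the increment of `w*` over an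
interval of length `p (σ j)`, so `ω_j ≤ v 0 · K · p (σ j)`, and summing against `a ≥ 0` gives the
bound.
-/

open Finset

lemma min_max_zero_sub_le (c : ℝ) {x y : ℝ} (hxy : x ≤ y) :
    min c (max 0 y) - min c (max 0 x) ≤ y - x := by
  simp only [min_def, max_def]
  split_ifs <;> linarith

lemma min_natCast_succ_max_zero (n : ℕ) (u : ℝ) :
    min ((n + 1 : ℕ) : ℝ) (max 0 u) = min (n : ℝ) (max 0 u) + min 1 (max 0 (u - n)) := by
  have hn : (0 : ℝ) ≤ n := n.cast_nonneg
  push_cast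
  simp only [min_def, max_def]
  split_ifs <;> linarith

lemma sum_fin_min_one_max_zero_sub (K : ℕ) (u : ℝ) :
    ∑ i : Fin K, min 1 (max 0 (u - i)) = min (K : ℝ) (max 0 u) := by
  induction K with
  | zero => simp
  | succ n ih => rw [Fin.sum_univ_castSucc, min_natCast_succ_max_zero]; simp [ih]

lemma wstar_sub_le {K : ℕ} {v : Fin K → ℝ} {c : ℝ} (hc : 0 ≤ c) (hv : ∀ i, v i ≤ c)
    {s t : ℝ} (hst : s ≤ t) :
    wstar K v t - wstar K v s ≤ c * K * (t - s) := by
  set ramp : ℝ → Fin K → ℝ := fun u i => min 1 (max 0 (u * K - i))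
  have hsK : s * K ≤ t * K := mul_le_mul_of_nonneg_right hst K.cast_nonneg
  have hramp : ∀ i, ramp s i ≤ ramp t i := fun i =>
    min_le_min_left _ (max_le_max_left _ (by linarith))
  calc wstar K v t - wstar K v s = ∑ i, v i * (ramp t i - ramp s i) := by
        simp only [wstar, ramp, ← sum_sub_distrib, mul_sub]
    _ ≤ ∑ i, c * (ramp t i - ramp s i) :=
        sum_le_sum fun i _ => mul_le_mul_of_nonneg_right (hv i) (sub_nonneg.2 (hramp i))
    _ = c * (min (K : ℝ) (max 0 (t * K)) - min (K : ℝ) (max 0 (s * K))) := by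
        simp only [ramp, ← mul_sum, sum_sub_distrib, sum_fin_min_one_max_zero_sub]
    _ ≤ c * (t * K - s * K) :=
        mul_le_mul_of_nonneg_left (min_max_zero_sub_le _ hsK) hc
    _ = c * K * (t - s) := by ring

lemma wowaWeight_le {K : ℕ} {v p : Fin K → ℝ} {c : ℝ} (hc : 0 ≤ c) (hv : ∀ i, v i ≤ c)
    (hp : ∀ j, 0 ≤ p j) (σ : Equiv.Perm (Fin K)) (j : Fin K) :
    wowaWeight K v p σ j ≤ c * K * p (σ j) := by
  have hsplit : ∑ i ∈ Iic j, p (σ i) = ∑ i ∈ Iio j, p (σ i) + p (σ j) := by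
    rw [Iic_eq_cons_Iio, sum_cons, add_comm]
  have h := wstar_sub_le (v := v) hc hv
    (le_add_of_nonneg_right (a := ∑ i ∈ Iio j, p (σ i)) (hp (σ j)))
  rwa [add_sub_cancel_left, ← hsplit] at h

theorem wowa_le_v1K_mean_general (K : ℕ) (hK : 0 < K) (v p : Fin K → ℝ)
    (hv0 : ∀ j, 0 ≤ v j)
    (hvmono : ∀ i j : Fin K, i ≤ j → v j ≤ v i)
    (hp0 : ∀ j, 0 ≤ p j)
    (a : Fin K → ℝ) (ha : ∀ j, 0 ≤ a j)
    (σ : Equiv.Perm (Fin K)) :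
    wowaW K v p σ a ≤ v ⟨0, hK⟩ * (K : ℝ) * ∑ j, p j * a j := by
  have hv : ∀ i, v i ≤ v ⟨0, hK⟩ := fun i => hvmono _ i (Nat.zero_le i.1)
  calc wowaW K v p σ a ≤ ∑ j, v ⟨0, hK⟩ * K * p (σ j) * a (σ j) :=
        sum_le_sum fun j _ =>
          mul_le_mul_of_nonneg_right (wowaWeight_le (hv0 _) hv hp0 σ j) (ha _)
    _ = v ⟨0, hK⟩ * K * ∑ j, p j * a j := by
        simp only [mul_assoc, ← mul_sum]
        rw [Equiv.sum_comp σ (fun j => p j * a j)]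

/-- Lemma 2: wowa(a) ≤ v₁ K ∑ p_j a_j for nonneg a. -/
theorem wowa_le_v1K_mean (K : ℕ) (hK : 0 < K) (v p : Fin K → ℝ)
    (hv0 : ∀ j, 0 ≤ v j) (hvs : ∑ j, v j = 1)
    (hvmono : ∀ i j : Fin K, i ≤ j → v j ≤ v i)
    (hp0 : ∀ j, 0 ≤ p j) (hps : ∑ j, p j = 1)
    (a : Fin K → ℝ) (ha : ∀ j, 0 ≤ a j)
    (σ : Equiv.Perm (Fin K))
    (hσ : ∀ i j : Fin K, i ≤ j → a (σ j) ≤ a (σ i)) :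
    wowaW K v p σ a ≤ v ⟨0, hK⟩ * (K : ℝ) * ∑ j, p j * a j :=
  wowa_le_v1K_mean_general K hK v p hv0 hvmono hp0 a ha σ
end

section
/- (Superadditivity across elements used in Theorem 1's proof) For any subset X ⊆ E and any fixed permutation σ, Σ_{j=1}^K ω_j Σ_{e_i∈X} c_{σ(j)i} = Σ_{e_i∈X} Σ_{j=1}^K ω_j c_{σ(j)i} ≤ Σ_{e_i∈X} ĉ_i, where ĉ_i = wowa_{(v,p)}(c_{1i},…,c_{Ki}) and σ is the permutation sorting the totals F(X,c_j) nonincreasingly; i.e., the WOWA value of a sum of nonnegative vectors is at most the sum of their WOWA values: wowa_{(v,p)}(Σ_i a^i) ≤ Σ_i wowa_{(v,p)}(a^i) for nonnegative vectors a^i ∈ ℝ^K, when v is nonincreasing. -/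
open Finset

/-!
For a fixed permutation `ρ`, the WOWA weights are the marginal gains of the set function
`J ↦ w*(∑ i ∈ J, p (ρ i))` along the chain of initial segments `Iic j`. Writing
`w*(t) = ∑ i, v i * (min (t K) (i + 1) - min (t K) i)` and summing by parts against the
nonnegative, nonincreasing `v` shows that the increments of `w*` decrease on `[0, ∞)`, so this
set function has diminishing returns. Summation by parts once more shows that for `a ≥ 0` the
permutation sorting `a` nonincreasingly maximises `wowaW ρ a` over all `ρ`, as in the greedy
description of a Choquet integral. Since `wowaW σ` is linear in `a`, the inequality follows
summand by summand.
-/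

theorem min_one_max_zero_sub (u c : ℝ) : min 1 (max 0 (u - c)) = min u (c + 1) - min u c := by
  simp only [min_def, max_def]
  split_ifs <;> linarith

theorem antitone_min_add_sub_min {h : ℝ} (hh : 0 ≤ h) (c : ℝ) :
    Antitone fun x => min (x + h) c - min x c := by
  intro x y hxy
  simp only [min_def]
  split_ifs <;> linarith

section LinearOrder

variable {ι : Type*} [LinearOrder ι]

theorem mul_sum_le_sum_mul_of_antitone (s : Finset ι) {d b : ι → ℝ} (hb : Antitone b)
    (hd : ∀ x ∈ s, 0 ≤ ∑ l ∈ s with l ≤ x, d l) {β : ℝ} (hβ : ∀ x ∈ s, β ≤ b x) :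
    β * ∑ l ∈ s, d l ≤ ∑ l ∈ s, d l * b l := by
  induction s using Finset.induction_on_max generalizing β with
  | empty => simp
  | insert a s hlt ih =>
    have ha : a ∉ s := fun h => lt_irrefl a (hlt a h)
    have hfilter : ∀ x ∈ s, {l ∈ insert a s | l ≤ x} = {l ∈ s | l ≤ x} := fun x hx => by
      rw [filter_insert, if_neg (not_le.2 (hlt x hx))]
    have ih' : b a * ∑ l ∈ s, d l ≤ ∑ l ∈ s, d l * b l :=
      ih (fun x hx => hfilter x hx ▸ hd x (mem_insert_of_mem hx)) fun x hx => hb (hlt x hx).le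
    have hall : {l ∈ insert a s | l ≤ a} = insert a s :=
      filter_true_of_mem fun x hx => (mem_insert.1 hx).elim le_of_eq fun h => (hlt x h).le
    have htotal : 0 ≤ ∑ l ∈ insert a s, d l := hall ▸ hd a (mem_insert_self a s)
    rw [sum_insert ha] at htotal
    rw [sum_insert ha, sum_insert ha]
    calc β * (d a + ∑ l ∈ s, d l) ≤ b a * (d a + ∑ l ∈ s, d l) :=
          mul_le_mul_of_nonneg_right (hβ a (mem_insert_self a s)) htotal
      _ ≤ d a * b a + ∑ l ∈ s, d l * b l := by linarith

theorem sum_mul_nonneg_of_sum_Iic_nonneg [Fintype ι] [LocallyFiniteOrderBot ι] {d b : ι → ℝ}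
    (hd : ∀ x, 0 ≤ ∑ l ∈ Iic x, d l) (hb : Antitone b) (hb0 : ∀ x, 0 ≤ b x) :
    0 ≤ ∑ l, d l * b l := by
  simpa using mul_sum_le_sum_mul_of_antitone univ hb
    (fun x _ => by simpa [filter_ge_eq_Iic] using hd x) (β := 0) fun x _ => hb0 x

end LinearOrder

def HasDiminishingReturns {ι : Type*} [DecidableEq ι] (f : Finset ι → ℝ) : Prop :=
  ∀ ⦃A B : Finset ι⦄ ⦃a : ι⦄, A ⊆ B → a ∉ B → f (insert a B) - f B ≤ f (insert a A) - f A

section LocallyFiniteOrderBot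

variable {ι : Type*} [LinearOrder ι] [LocallyFiniteOrderBot ι]

theorem sum_Iic_sub_Iio_eq_of_isLowerSet (f : Finset ι → ℝ) {J : Finset ι}
    (hJ : IsLowerSet (J : Set ι)) :
    ∑ j ∈ J, (f (Iic j) - f (Iio j)) = f J - f ∅ := by
  induction J using Finset.induction_on_max with
  | empty => simp
  | insert a J hlt ih =>
    have hJ_eq : J = Iio a := by
      ext x
      refine ⟨fun hx => mem_Iio.2 (hlt x hx), fun hx => ?_⟩
      have hmem := hJ (mem_Iio.1 hx).le (mem_insert_self a J)
      exact (mem_insert.1 hmem).resolve_left (mem_Iio.1 hx).ne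
    subst hJ_eq
    rw [sum_insert notMem_Iio_self, ih (by simpa using isLowerSet_Iio a), Iio_insert]
    ring

theorem sum_Iic_sub_Iio_le (f : Finset ι → ℝ) (hf : HasDiminishingReturns f) (J : Finset ι) :
    ∑ j ∈ J, (f (Iic j) - f (Iio j)) ≤ f J - f ∅ := by
  induction J using Finset.induction_on_max with
  | empty => simp
  | insert a J hlt ih =>
    have ha : a ∉ J := fun h => lt_irrefl a (hlt a h)
    have hgain : f (Iic a) - f (Iio a) ≤ f (insert a J) - f J := by
      rw [← Iio_insert]
      exact hf (fun x hx => mem_Iio.2 (hlt x hx)) notMem_Iio_self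
    rw [sum_insert ha]
    linarith

end LocallyFiniteOrderBot

section wstar

variable {K : ℕ} {v : Fin K → ℝ}

theorem wstar_eq_sum_min_card (t : ℝ) :
    wstar K v t = ∑ i, v i * (min (t * K) (#(Iic i) : ℝ) - min (t * K) (#(Iio i) : ℝ)) := by
  refine sum_congr rfl fun i _ => ?_
  rw [min_one_max_zero_sub, Fin.card_Iic, Fin.card_Iio]
  push_cast
  rfl

theorem wstar_add_sub_wstar_le (hv0 : ∀ i, 0 ≤ v i) (hv : Antitone v) {x y h : ℝ}
    (hx : 0 ≤ x) (hxy : x ≤ y) (hh : 0 ≤ h) :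
    wstar K v (y + h) - wstar K v y ≤ wstar K v (x + h) - wstar K v x := by
  set G : Finset (Fin K) → ℝ := fun J =>
    (min ((x + h) * K) (#J : ℝ) - min (x * K) (#J : ℝ)) -
      (min ((y + h) * K) (#J : ℝ) - min (y * K) (#J : ℝ)) with hG_def
  have hK : (0 : ℝ) ≤ K := K.cast_nonneg
  have hG : ∀ J, 0 ≤ G J := fun J => sub_nonneg.2 <| by
    simpa only [add_mul] using
      antitone_min_add_sub_min (mul_nonneg hh hK) (#J : ℝ) (mul_le_mul_of_nonneg_right hxy hK)
  have hG_empty : G ∅ = 0 := by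
    have hy : 0 ≤ y := hx.trans hxy
    simp only [hG_def, card_empty, Nat.cast_zero]
    rw [min_eq_right (by positivity), min_eq_right (by positivity), min_eq_right (by positivity),
      min_eq_right (by positivity)]
    ring
  have key : 0 ≤ ∑ i, (G (Iic i) - G (Iio i)) * v i :=
    sum_mul_nonneg_of_sum_Iic_nonneg (fun k => by
      rw [sum_Iic_sub_Iio_eq_of_isLowerSet G (by simpa using isLowerSet_Iic k), hG_empty,
        sub_zero]
      exact hG _) hv hv0
  rw [← sub_nonneg]
  convert key using 1
  simp only [wstar_eq_sum_min_card, hG_def, ← sum_sub_distrib]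
  exact sum_congr rfl fun i _ => by ring

theorem hasDiminishingReturns_wstar_sum (hv0 : ∀ i, 0 ≤ v i) (hv : Antitone v) {α : Type*}
    [DecidableEq α] {q : α → ℝ} (hq : ∀ x, 0 ≤ q x) :
    HasDiminishingReturns fun J => wstar K v (∑ x ∈ J, q x) := by
  intro A B a hAB haB
  dsimp only
  rw [sum_insert haB, sum_insert fun ha => haB (hAB ha), add_comm (q a), add_comm (q a)]
  exact wstar_add_sub_wstar_le hv0 hv (sum_nonneg fun x _ => hq x)
    (sum_le_sum_of_subset_of_nonneg hAB fun x _ _ => hq x) (hq a)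

end wstar

section wowa

variable {K : ℕ} {v p : Fin K → ℝ}

theorem wowaW_le_wowaW_of_antitone (hv0 : ∀ i, 0 ≤ v i) (hv : Antitone v) (hp : ∀ i, 0 ≤ p i)
    {a : Fin K → ℝ} (ha : ∀ i, 0 ≤ a i) (σ : Equiv.Perm (Fin K)) {τ : Equiv.Perm (Fin K)}
    (hτ : Antitone (a ∘ τ)) :
    wowaW K v p σ a ≤ wowaW K v p τ a := by
  set π := τ.trans σ.symm
  let f (ρ : Equiv.Perm (Fin K)) (J : Finset (Fin K)) : ℝ := wstar K v (∑ i ∈ J, p (ρ i))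
  have hpartial (k : Fin K) :
      ∑ l ∈ Iic k, wowaWeight K v p σ (π l) ≤ ∑ l ∈ Iic k, wowaWeight K v p τ l :=
    calc ∑ l ∈ Iic k, wowaWeight K v p σ (π l)
        = ∑ j ∈ (Iic k).map π.toEmbedding, wowaWeight K v p σ j := by rw [sum_map]; rfl
      _ ≤ f σ ((Iic k).map π.toEmbedding) - f σ ∅ :=
          sum_Iic_sub_Iio_le _ (hasDiminishingReturns_wstar_sum hv0 hv fun i => hp (σ i)) _
      _ = f τ (Iic k) - f τ ∅ := by simp [f, π]
      _ = ∑ l ∈ Iic k, wowaWeight K v p τ l :=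
          (sum_Iic_sub_Iio_eq_of_isLowerSet _ (by simpa using isLowerSet_Iic k)).symm
  have hreindex : wowaW K v p σ a = ∑ l, wowaWeight K v p σ (π l) * a (τ l) := by
    rw [wowaW, ← Equiv.sum_comp π]
    simp [π]
  have key := sum_mul_nonneg_of_sum_Iic_nonneg
    (d := fun l => wowaWeight K v p τ l - wowaWeight K v p σ (π l))
    (fun k => by simpa [sum_sub_distrib] using hpartial k) hτ fun l => ha (τ l)
  rw [hreindex, wowaW, ← sub_nonneg, ← sum_sub_distrib]
  simpa [sub_mul] using key

theorem wowaW_sum {ι : Type*} (σ : Equiv.Perm (Fin K)) (s : Finset ι) (a : ι → Fin K → ℝ) :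
    wowaW K v p σ (fun j => ∑ i ∈ s, a i j) = ∑ i ∈ s, wowaW K v p σ (a i) := by
  simp only [wowaW, mul_sum]
  exact sum_comm

end wowa

theorem wowa_sum_le_general (K : ℕ) (v p : Fin K → ℝ)
    (hv0 : ∀ j, 0 ≤ v j)
    (hvmono : ∀ i j : Fin K, i ≤ j → v j ≤ v i)
    (hp0 : ∀ j, 0 < p j)
    {ι : Type*} (s : Finset ι) (a : ι → Fin K → ℝ)
    (ha : ∀ i ∈ s, ∀ j, 0 ≤ a i j)
    (σ : Equiv.Perm (Fin K))
    (σi : ι → Equiv.Perm (Fin K))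
    (hσi : ∀ i ∈ s, ∀ j j' : Fin K, j ≤ j' → a i (σi i j') ≤ a i (σi i j)) :
    wowaW K v p σ (fun j => ∑ i ∈ s, a i j) ≤
      ∑ i ∈ s, wowaW K v p (σi i) (a i) := by
  rw [wowaW_sum]
  exact sum_le_sum fun i hi =>
    wowaW_le_wowaW_of_antitone hv0 hvmono (fun j => (hp0 j).le) (ha i hi) σ (hσi i hi)

/-- WOWA of a sum of nonnegative vectors is at most the sum of
their WOWA values (superadditivity across elements). -/
theorem wowa_sum_le (K : ℕ) (v p : Fin K → ℝ)
    (hv0 : ∀ j, 0 ≤ v j) (hvs : ∑ j, v j = 1)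
    (hvmono : ∀ i j : Fin K, i ≤ j → v j ≤ v i)
    (hp0 : ∀ j, 0 < p j) (hps : ∑ j, p j = 1)
    {ι : Type*} (s : Finset ι) (a : ι → Fin K → ℝ)
    (ha : ∀ i ∈ s, ∀ j, 0 ≤ a i j)
    (σ : Equiv.Perm (Fin K))
    (hσ : ∀ j j' : Fin K, j ≤ j' → (∑ i ∈ s, a i (σ j')) ≤ ∑ i ∈ s, a i (σ j))
    (σi : ι → Equiv.Perm (Fin K))
    (hσi : ∀ i ∈ s, ∀ j j' : Fin K, j ≤ j' → a i (σi i j') ≤ a i (σi i j)) :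
    wowaW K v p σ (fun j => ∑ i ∈ s, a i j) ≤
      ∑ i ∈ s, wowaW K v p (σi i) (a i) :=
  wowa_sum_le_general K v p hv0 hvmono hp0 s a ha σ σi hσi
end

section
/- (Riemann representation, formula (1)) For any a ∈ ℝ^K with sorting permutation σ (a_{σ(1)} ≥ … ≥ a_{σ(K)}) and breakpoints α_0 = 0, α_i = Σ_{j≤i} p_{σ(j)}, define the step function h(θ) = a_{σ(i)} for θ ∈ (α_{i−1}, α_i]. Then wowa_{(v,p)}(a) = K · Σ_{j=1}^K v_j ∫_{(j−1)/K}^{j/K} h(θ) dθ. -/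
open Finset

/-!
On the cell `[i/K, (i+1)/K]` the function `w*` is affine with slope `K v_i`, so
`ω_j = K ∑_i v_i |[i/K, (i+1)/K] ∩ (α_{j-1}, α_j]|`, the length being the difference of the two
breakpoints clamped to the cell. Since `h = a_{σ(j)}` on `(α_{j-1}, α_j]`, the integral of `h` over
the same cell is `∑_j a_{σ(j)} |[i/K, (i+1)/K] ∩ (α_{j-1}, α_j]|`; exchanging the two sums gives
the formula.
-/

open MeasureTheory

theorem intervalIntegrable_of_forall_mem_Ioc_eq {f : ℝ → ℝ} {a b c : ℝ} (hab : a ≤ b)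
    (hf : ∀ θ ∈ Set.Ioc a b, f θ = c) : IntervalIntegrable f volume a b :=
  (intervalIntegrable_const (c := c)).congr <| by
    rw [Set.uIoc_of_le hab]
    exact fun θ hθ => (hf θ hθ).symm

theorem integral_of_forall_mem_Ioc_eq {f : ℝ → ℝ} {a b c : ℝ} (hab : a ≤ b)
    (hf : ∀ θ ∈ Set.Ioc a b, f θ = c) : ∫ θ in a..b, f θ = c * (b - a) := by
  rw [intervalIntegral.integral_congr_ae (g := fun _ => c)
    (Filter.Eventually.of_forall fun θ hθ => hf θ (by rwa [Set.uIoc_of_le hab] at hθ)),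
    intervalIntegral.integral_const, smul_eq_mul, mul_comm]

theorem integral_eq_sum_of_forall_mem_Ioc_eq {n : ℕ} {b : ℕ → ℝ} (hb : Monotone b)
    {f : ℝ → ℝ} {y : Fin n → ℝ}
    (hf : ∀ k : Fin n, ∀ θ ∈ Set.Ioc (b k) (b (k.1 + 1)), f θ = y k) :
    ∫ θ in b 0..b n, f θ = ∑ k : Fin n, y k * (b (k.1 + 1) - b k) := by
  have hstep (k : Fin n) : b k ≤ b (k.1 + 1) := hb k.1.le_succ
  rw [← intervalIntegral.sum_integral_adjacent_intervals fun k hk =>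
      intervalIntegrable_of_forall_mem_Ioc_eq (hstep ⟨k, hk⟩) (hf ⟨k, hk⟩),
    ← Fin.sum_univ_eq_sum_range (fun k => ∫ θ in b k..b (k + 1), f θ)]
  exact sum_congr rfl fun k _ => integral_of_forall_mem_Ioc_eq (hstep k) (hf k)

theorem Ioc_max_min_subset {α : Type*} [LinearOrder α] (lo hi x y : α) :
    Set.Ioc (max lo (min hi x)) (max lo (min hi y)) ⊆ Set.Ioc x y := by
  rintro θ ⟨hxθ, hθy⟩
  simp only [max_lt_iff, min_lt_iff, le_max_iff, le_min_iff] at hxθ hθy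
  grind

theorem integral_eq_sum_max_min_of_forall_mem_Ioc_eq {n : ℕ} {b : ℕ → ℝ} (hb : Monotone b)
    {f : ℝ → ℝ} {y : Fin n → ℝ}
    (hf : ∀ k : Fin n, ∀ θ ∈ Set.Ioc (b k) (b (k.1 + 1)), f θ = y k)
    {lo hi : ℝ} (hlohi : lo ≤ hi) (hlo : b 0 ≤ lo) (hhi : hi ≤ b n) :
    ∫ θ in lo..hi, f θ =
      ∑ k : Fin n, y k * (max lo (min hi (b (k.1 + 1))) - max lo (min hi (b k))) := by
  have h0 : max lo (min hi (b 0)) = lo := max_eq_left ((min_le_right _ _).trans hlo)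
  have hn : max lo (min hi (b n)) = hi := by rw [min_eq_left hhi, max_eq_right hlohi]
  have := integral_eq_sum_of_forall_mem_Ioc_eq (b := fun k => max lo (min hi (b k)))
    (monotone_const.max (monotone_const.min hb))
    fun k θ hθ => hf k θ (Ioc_max_min_subset lo hi _ _ hθ)
  rwa [h0, hn] at this

theorem min_one_max_zero_mul_sub {K : ℝ} (hK : 0 < K) (i t : ℝ) :
    min 1 (max 0 (t * K - i)) = K * (max (i / K) (min ((i + 1) / K) t) - i / K) := by
  rw [← max_sub_sub_right, ← min_sub_sub_right, mul_max_of_nonneg _ _ hK.le,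
    mul_min_of_nonneg _ _ hK.le]
  field_simp
  ring_nf
  rw [max_min_distrib_left, max_eq_right zero_le_one]

theorem wstar_sub_wstar {K : ℕ} (hK : 0 < K) (v : Fin K → ℝ) (s t : ℝ) :
    wstar K v t - wstar K v s = K * ∑ i : Fin K, v i *
      (max ((i.1 : ℝ) / K) (min ((i.1 + 1) / K) t) -
        max ((i.1 : ℝ) / K) (min ((i.1 + 1) / K) s)) := by
  simp only [wstar, min_one_max_zero_mul_sub (Nat.cast_pos.2 hK), ← sum_sub_distrib, mul_sum]
  exact sum_congr rfl fun i _ => by ring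

section PrefixSum

variable {K : ℕ} (q : Fin K → ℝ)

def prefixSum (n : ℕ) : ℝ := ∑ j with j.1 < n, q j

theorem prefixSum_zero : prefixSum q 0 = 0 := by simp [prefixSum]

theorem prefixSum_self : prefixSum q K = ∑ j, q j := by simp [prefixSum]

theorem sum_Iio_eq_prefixSum (j : Fin K) : ∑ i ∈ Iio j, q i = prefixSum q j := by
  congr 1; ext i
  simp only [mem_Iio, mem_filter, mem_univ, true_and, Fin.lt_def]

theorem sum_Iic_eq_prefixSum (j : Fin K) : ∑ i ∈ Iic j, q i = prefixSum q (j + 1) := by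
  congr 1; ext i
  simp only [mem_Iic, mem_filter, mem_univ, true_and, Fin.le_def, Nat.lt_succ_iff]

variable {q} in
theorem monotone_prefixSum (hq : ∀ j, 0 ≤ q j) : Monotone (prefixSum q) :=
  fun _ _ hmn => sum_le_sum_of_subset_of_nonneg
    (fun j => by simpa using fun h => h.trans_le hmn) fun j _ _ => hq j

end PrefixSum

theorem wowa_riemann_general (K : ℕ) (v p : Fin K → ℝ)
    (hp0 : ∀ j, 0 ≤ p j) (hps : ∑ j, p j = 1)
    (a : Fin K → ℝ) (σ : Equiv.Perm (Fin K))
    (h : ℝ → ℝ)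
    (hh : ∀ i : Fin K, ∀ θ : ℝ,
      (∑ j ∈ Finset.Iio i, p (σ j)) < θ → θ ≤ (∑ j ∈ Finset.Iic i, p (σ j)) →
      h θ = a (σ i)) :
    wowaW K v p σ a =
      (K : ℝ) * ∑ j : Fin K, v j *
        ∫ θ in ((j.1 : ℝ) / (K : ℝ))..(((j.1 : ℝ) + 1) / (K : ℝ)), h θ := by
  obtain rfl | hK := K.eq_zero_or_pos
  · simp [wowaW]
  set α := prefixSum fun j => p (σ j)
  have hα0 : α 0 = 0 := prefixSum_zero _
  have hαK : α K = 1 := (prefixSum_self _).trans ((Equiv.sum_comp σ p).trans hps)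
  have hstep (j : Fin K) (θ) (hθ : θ ∈ Set.Ioc (α j) (α (j.1 + 1))) : h θ = a (σ j) :=
    hh j θ (by rw [sum_Iio_eq_prefixSum]; exact hθ.1) (by rw [sum_Iic_eq_prefixSum]; exact hθ.2)
  have hint (i : Fin K) : ∫ θ in (i.1 : ℝ) / K..((i.1 : ℝ) + 1) / K, h θ =
      ∑ j : Fin K, a (σ j) * (max ((i.1 : ℝ) / K) (min ((i.1 + 1) / K) (α (j.1 + 1))) -
        max ((i.1 : ℝ) / K) (min ((i.1 + 1) / K) (α j))) := by
    have hKpos : (0 : ℝ) < K := Nat.cast_pos.2 hK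
    have hiK : (i.1 : ℝ) + 1 ≤ K := by exact_mod_cast i.isLt
    exact integral_eq_sum_max_min_of_forall_mem_Ioc_eq (monotone_prefixSum fun j => hp0 _) hstep
      (by gcongr; linarith) (hα0.le.trans (by positivity)) (((div_le_one hKpos).2 hiK).trans hαK.ge)
  simp only [wowaW, wowaWeight, sum_Iio_eq_prefixSum, sum_Iic_eq_prefixSum, wstar_sub_wstar hK,
    hint, mul_sum, sum_mul]
  rw [sum_comm]
  exact sum_congr rfl fun i _ => sum_congr rfl fun j _ => by ring

/-- formula (1): Riemann representation of WOWA via the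
nonincreasing step function h. -/
theorem wowa_riemann (K : ℕ) (hK : 0 < K) (v p : Fin K → ℝ)
    (hv0 : ∀ j, 0 ≤ v j) (hvs : ∑ j, v j = 1)
    (hp0 : ∀ j, 0 ≤ p j) (hps : ∑ j, p j = 1)
    (a : Fin K → ℝ) (σ : Equiv.Perm (Fin K))
    (hσ : ∀ i j : Fin K, i ≤ j → a (σ j) ≤ a (σ i))
    (h : ℝ → ℝ)
    (hh : ∀ i : Fin K, ∀ θ : ℝ,
      (∑ j ∈ Finset.Iio i, p (σ j)) < θ → θ ≤ (∑ j ∈ Finset.Iic i, p (σ j)) →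
      h θ = a (σ i)) :
    wowaW K v p σ a =
      (K : ℝ) * ∑ j : Fin K, v j *
        ∫ θ in ((j.1 : ℝ) / (K : ℝ))..(((j.1 : ℝ) + 1) / (K : ℝ)), h θ :=
  wowa_riemann_general K v p hp0 hps a σ h hh
end
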